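/- Let K be a field, S = K[x_1,…,x_n], and let I ⊆ S be a monomial ideal with minimal monomial generating set G(I) = {v_1,…,v_m}. Let S' = S[x_{n+1}] and I' = (v_1,…,v_{m−1}, x_{n+1} v_m) ⊆ S'. Then sdepth(I') ≤ sdepth(I) + 1. -/

import Mathlib

open MvPolynomial

/-- The Stanley space `u K[Z]`: the `K`-span of all monomials `x^(u+τ)` with
`supp τ ⊆ Z`. -/
noncomputable def StanleySpace (K : Type*) [Field K] {n : ℕ} (u : Fin n →₀ ℕ) (Z : Finset (Fin n)) :
    Submodule K (MvPolynomial (Fin n) K) :=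
  Submodule.span K {p | ∃ τ : Fin n →₀ ℕ, (τ.support : Set (Fin n)) ⊆ Z ∧
    p = monomial (u + τ) (1 : K)}

/-- A Stanley decomposition of a monomial ideal `I`: a finite family of Stanley spaces
`u_i K[Z_i]` with `u_i` a monomial of `I`, whose internal direct sum is `I`
(as a `K`-vector space). -/
structure StanleyDecomposition (K : Type*) [Field K] {n : ℕ}
    (I : Ideal (MvPolynomial (Fin n) K)) where
  r : ℕ
  rpos : 0 < r
  u : Fin r → (Fin n →₀ ℕ)
  Z : Fin r → Finset (Fin n)
  mem : ∀ i, monomial (u i) (1 : K) ∈ I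
  isSup : Submodule.restrictScalars K I = ⨆ i, StanleySpace K (u i) (Z i)
  indep : iSupIndep fun i => StanleySpace K (u i) (Z i)

/-- `sdepth 𝒟 = min_i |Z_i|`. -/
def StanleyDecomposition.sdepth {K : Type*} [Field K] {n : ℕ}
    {I : Ideal (MvPolynomial (Fin n) K)} (D : StanleyDecomposition K I) : ℕ :=
  Finset.univ.inf' ⟨⟨0, D.rpos⟩, Finset.mem_univ _⟩ fun i => (D.Z i).card

/-- The Stanley depth of a monomial ideal: the maximum of `sdepth 𝒟` over all
Stanley decompositions `𝒟` of `I`. -/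
noncomputable def Ideal.sdepth (K : Type*) [Field K] {n : ℕ}
    (I : Ideal (MvPolynomial (Fin n) K)) : ℕ :=
  sSup (Set.range fun D : StanleyDecomposition K I => D.sdepth)

/-!
The monomials of `I` are exactly the monomials `x^a` with `x^a x_{n+1} ∈ I'`, i.e. the slice of
`I'` in `x_{n+1}`-degree one. A Stanley space `u' K[Z']` of `I'` meets this slice either not at
all or in `x_{n+1} · u K[Z]`, where `u` is `u'` with its last exponent dropped and
`Z = Z' \ {x_{n+1}}`. Slicing a Stanley decomposition of `I'` therefore yields one of `I`, and each
Stanley space loses at most one variable.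
-/

open Function

namespace MvPolynomial

variable {σ R : Type*} [CommSemiring R]

theorem restrictSupport_iUnion {ι : Sort*} (s : ι → Set (σ →₀ ℕ)) :
    restrictSupport R (⋃ i, s i) = ⨆ i, restrictSupport R (s i) := by
  simp only [restrictSupport_eq_span, Set.image_iUnion, Submodule.span_iUnion]

theorem restrictSupport_inter (s t : Set (σ →₀ ℕ)) :
    restrictSupport R (s ∩ t) = restrictSupport R s ⊓ restrictSupport R t := by
  ext p
  simp [mem_restrictSupport_iff, Set.subset_inter_iff]

theorem restrictSupport_empty : restrictSupport R (∅ : Set (σ →₀ ℕ)) = ⊥ := by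
  ext p
  simp [mem_restrictSupport_iff]

theorem restrictScalars_span_monomial (G : Set (σ →₀ ℕ)) :
    Submodule.restrictScalars R (Ideal.span ((fun d => monomial d (1 : R)) '' G)) =
      restrictSupport R (upperClosure G) := by
  ext p
  simp [mem_ideal_span_monomial_image, mem_restrictSupport_iff, Set.subset_def]

variable [Nontrivial R]

theorem restrictSupport_injective : Injective (restrictSupport R (σ := σ)) := by
  intro s t h
  ext d
  simpa using SetLike.ext_iff.mp h (monomial d 1)

theorem disjoint_restrictSupport_iff {s t : Set (σ →₀ ℕ)} :
    Disjoint (restrictSupport R s) (restrictSupport R t) ↔ Disjoint s t := by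
  rw [disjoint_iff, disjoint_iff, ← restrictSupport_inter, ← restrictSupport_empty,
    restrictSupport_injective.eq_iff]
  rfl

theorem iSupIndep_restrictSupport_iff {ι : Type*} {s : ι → Set (σ →₀ ℕ)} :
    iSupIndep (fun i => restrictSupport R (s i)) ↔ Pairwise (Disjoint on s) := by
  simp only [← iSupIndep_iff_pairwiseDisjoint, iSupIndep_def, ← restrictSupport_iUnion,
    disjoint_restrictSupport_iff]
  rfl

end MvPolynomial

def stanleyBox {σ : Type*} (u : σ →₀ ℕ) (Z : Finset σ) : Set (σ →₀ ℕ) :=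
  {c | u ≤ c ∧ ∀ j ∉ Z, c j = u j}

theorem stanleyBox_eq_image {σ : Type*} (u : σ →₀ ℕ) (Z : Finset σ) :
    stanleyBox u Z = (u + ·) '' {τ | (τ.support : Set σ) ⊆ Z} := by
  ext c
  constructor
  · rintro ⟨hle, hZ⟩
    refine ⟨c - u, fun j hj => ?_, add_tsub_cancel_of_le hle⟩
    by_contra hjZ
    simp [hZ j hjZ] at hj
  · rintro ⟨τ, hτ, rfl⟩
    refine ⟨le_self_add, fun j hj => ?_⟩
    have : τ j = 0 := Finsupp.notMem_support_iff.mp fun h => hj (hτ h)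
    simp [this]

theorem self_mem_stanleyBox {σ : Type*} (u : σ →₀ ℕ) (Z : Finset σ) : u ∈ stanleyBox u Z :=
  ⟨le_rfl, fun _ _ => rfl⟩

theorem stanleySpace_eq_restrictSupport (K : Type*) [Field K] {n : ℕ} (u : Fin n →₀ ℕ)
    (Z : Finset (Fin n)) : StanleySpace K u Z = restrictSupport K (stanleyBox u Z) := by
  rw [StanleySpace, restrictSupport_eq_span, stanleyBox_eq_image, Set.image_image]
  congr 1
  ext p
  simp [eq_comm]

namespace StanleyDecomposition

variable {K : Type*} [Field K] {n : ℕ} {I : Ideal (MvPolynomial (Fin n) K)}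
  {E : Set (Fin n →₀ ℕ)}

theorem iUnion_stanleyBox (D : StanleyDecomposition K I)
    (hE : Submodule.restrictScalars K I = restrictSupport K E) :
    ⋃ i, stanleyBox (D.u i) (D.Z i) = E :=
  restrictSupport_injective (R := K) <| by
    rw [restrictSupport_iUnion, ← hE, D.isSup]
    simp only [stanleySpace_eq_restrictSupport]

theorem pairwise_disjoint_stanleyBox (D : StanleyDecomposition K I) :
    Pairwise (Disjoint on fun i => stanleyBox (D.u i) (D.Z i)) :=
  iSupIndep_restrictSupport_iff.mp <| by
    simpa only [stanleySpace_eq_restrictSupport] using D.indep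

noncomputable def ofStanleyBoxes {ι : Type*} [Fintype ι] [Nonempty ι] (u : ι → Fin n →₀ ℕ)
    (Z : ι → Finset (Fin n)) (hE : Submodule.restrictScalars K I = restrictSupport K E)
    (hcover : ⋃ i, stanleyBox (u i) (Z i) = E)
    (hdisj : Pairwise (Disjoint on fun i => stanleyBox (u i) (Z i))) :
    StanleyDecomposition K I where
  r := Fintype.card ι
  rpos := Fintype.card_pos
  u := u ∘ (Fintype.equivFin ι).symm
  Z := Z ∘ (Fintype.equivFin ι).symm
  mem k := by
    have hu : u ((Fintype.equivFin ι).symm k) ∈ E := by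
      rw [← hcover]
      exact Set.mem_iUnion_of_mem _ (self_mem_stanleyBox _ _)
    rw [← Submodule.restrictScalars_mem K, hE, monomial_mem_restrictSupport]
    exact Or.inl hu
  isSup := by
    simp only [hE, ← hcover, restrictSupport_iUnion, stanleySpace_eq_restrictSupport,
      comp_apply]
    exact ((Fintype.equivFin ι).symm.iSup_comp (g := fun i =>
      restrictSupport K (stanleyBox (u i) (Z i)))).symm
  indep := by
    simp only [stanleySpace_eq_restrictSupport]
    exact iSupIndep_restrictSupport_iff.mpr
      (hdisj.comp_of_injective (Fintype.equivFin ι).symm.injective)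

theorem sdepth_le_card (D : StanleyDecomposition K I) (i : Fin D.r) :
    D.sdepth ≤ (D.Z i).card :=
  Finset.inf'_le _ (Finset.mem_univ i)

theorem le_sdepth_ofStanleyBoxes {ι : Type*} [Fintype ι] [Nonempty ι] {u : ι → Fin n →₀ ℕ}
    {Z : ι → Finset (Fin n)} {hE : Submodule.restrictScalars K I = restrictSupport K E}
    {hcover : ⋃ i, stanleyBox (u i) (Z i) = E}
    {hdisj : Pairwise (Disjoint on fun i => stanleyBox (u i) (Z i))} {k : ℕ}
    (hk : ∀ i, k ≤ (Z i).card) : k ≤ (ofStanleyBoxes u Z hE hcover hdisj).sdepth :=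
  Finset.le_inf' _ _ fun _ _ => hk _

theorem sdepth_le_ideal_sdepth (D : StanleyDecomposition K I) : D.sdepth ≤ I.sdepth K := by
  refine le_csSup ⟨n, ?_⟩ ⟨D, rfl⟩
  rintro _ ⟨D', rfl⟩
  exact (D'.sdepth_le_card ⟨0, D'.rpos⟩).trans
    ((Finset.card_le_univ _).trans_eq (Fintype.card_fin n))

end StanleyDecomposition

theorem Ideal.sdepth_le {K : Type*} [Field K] {n : ℕ} {I : Ideal (MvPolynomial (Fin n) K)}
    {k : ℕ}
    (h : ∀ D : StanleyDecomposition K I, D.sdepth ≤ k) : I.sdepth K ≤ k :=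
  csSup_le' <| by
    rintro _ ⟨D, rfl⟩
    exact h D

section WithLastOne

variable {n : ℕ}

noncomputable def withLastOne (a : Fin n →₀ ℕ) : Fin (n + 1) →₀ ℕ :=
  a.mapDomain Fin.castSucc + Finsupp.single (Fin.last n) 1

@[simp]
theorem mapDomain_castSucc_apply_castSucc (a : Fin n →₀ ℕ) (j : Fin n) :
    a.mapDomain Fin.castSucc j.castSucc = a j :=
  Finsupp.mapDomain_apply (Fin.castSucc_injective n) a j

@[simp]
theorem mapDomain_castSucc_apply_last (a : Fin n →₀ ℕ) :
    a.mapDomain Fin.castSucc (Fin.last n) = 0 :=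
  Finsupp.mapDomain_of_notMem_range _ _ (by simp)

@[simp]
theorem withLastOne_apply_castSucc (a : Fin n →₀ ℕ) (j : Fin n) :
    withLastOne a j.castSucc = a j := by
  simp [withLastOne]

@[simp]
theorem withLastOne_apply_last (a : Fin n →₀ ℕ) : withLastOne a (Fin.last n) = 1 := by
  simp [withLastOne]

theorem le_withLastOne_iff {c : Fin (n + 1) →₀ ℕ} {a : Fin n →₀ ℕ} :
    c ≤ withLastOne a ↔ (∀ j : Fin n, c j.castSucc ≤ a j) ∧ c (Fin.last n) ≤ 1 := by
  simp [Finsupp.le_def, Fin.forall_fin_succ']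

theorem withLastOne_le_withLastOne_iff {b a : Fin n →₀ ℕ} :
    withLastOne b ≤ withLastOne a ↔ b ≤ a := by
  rw [le_withLastOne_iff]
  simp [Finsupp.le_def]

theorem mapDomain_castSucc_le_withLastOne_iff {b a : Fin n →₀ ℕ} :
    b.mapDomain Fin.castSucc ≤ withLastOne a ↔ b ≤ a := by
  rw [le_withLastOne_iff]
  simp [Finsupp.le_def]

theorem withLastOne_preimage_upperClosure (w : Fin n →₀ ℕ) (T : Set (Fin n →₀ ℕ)) :
    withLastOne ⁻¹' upperClosure (insert (withLastOne w) ((·.mapDomain Fin.castSucc) '' T)) =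
      (upperClosure (insert w T) : Set (Fin n →₀ ℕ)) := by
  ext a
  simp [mem_upperClosure, withLastOne_le_withLastOne_iff,
    mapDomain_castSucc_le_withLastOne_iff]

theorem withLastOne_preimage_stanleyBox {u : Fin (n + 1) →₀ ℕ} {Z : Finset (Fin (n + 1))}
    (h : (withLastOne ⁻¹' stanleyBox u Z).Nonempty) :
    withLastOne ⁻¹' stanleyBox u Z =
      stanleyBox (u.comapDomain Fin.castSucc (Fin.castSucc_injective n).injOn)
        (Z.preimage Fin.castSucc (Fin.castSucc_injective n).injOn) := by
  -- a point of the preimage shows that the last coordinate imposes no further condition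
  obtain ⟨a, hle, hZ⟩ := h
  have hle_last : u (Fin.last n) ≤ 1 := by simpa using hle (Fin.last n)
  have hZ_last : Fin.last n ∉ Z → 1 = u (Fin.last n) := by simpa using hZ (Fin.last n)
  ext b
  simp only [Set.mem_preimage, stanleyBox, Set.mem_ofPred_eq, Finsupp.le_def,
    Fin.forall_fin_succ', withLastOne_apply_castSucc, withLastOne_apply_last,
    Finsupp.comapDomain_apply, Finset.mem_preimage]
  tauto

theorem card_le_card_preimage_castSucc_add_one (Z : Finset (Fin (n + 1))) :
    Z.card ≤ (Z.preimage Fin.castSucc (Fin.castSucc_injective n).injOn).card + 1 := by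
  classical
  calc Z.card
      ≤ (insert (Fin.last n)
          ((Z.preimage Fin.castSucc (Fin.castSucc_injective n).injOn).map Fin.castSuccEmb)).card :=
        Finset.card_le_card fun k hk => by
          rcases Fin.eq_castSucc_or_eq_last k with ⟨j, rfl⟩ | rfl <;> simp [hk]
    _ ≤ _ := (Finset.card_insert_le _ _).trans_eq (by rw [Finset.card_map])

end WithLastOne

theorem StanleyDecomposition.exists_sdepth_le_of_withLastOne_preimage {K : Type*} [Field K]
    {n : ℕ} {I : Ideal (MvPolynomial (Fin n) K)} {I' : Ideal (MvPolynomial (Fin (n + 1)) K)}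
    {E' : Set (Fin (n + 1) →₀ ℕ)} (hI' : Submodule.restrictScalars K I' = restrictSupport K E')
    (hI : Submodule.restrictScalars K I = restrictSupport K (withLastOne ⁻¹' E'))
    (hne : (withLastOne ⁻¹' E').Nonempty) (D' : StanleyDecomposition K I') :
    ∃ D : StanleyDecomposition K I, D'.sdepth ≤ D.sdepth + 1 := by
  classical
  let B (i : Fin D'.r) := withLastOne ⁻¹' stanleyBox (D'.u i) (D'.Z i)
  let ι := {i // (B i).Nonempty}
  have hB (i : ι) := withLastOne_preimage_stanleyBox i.2
  have hcover : ⋃ i : ι, B i = withLastOne ⁻¹' E' := by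
    rw [Set.iUnion_subtype, ← D'.iUnion_stanleyBox hI', Set.preimage_iUnion]
    exact Set.iUnion_congr fun i => Set.iUnion_nonempty_self _
  have : Nonempty ι := by
    obtain ⟨a, ha⟩ := hne
    rw [← hcover, Set.mem_iUnion] at ha
    obtain ⟨i, -⟩ := ha
    exact ⟨i⟩
  have hdisj : Pairwise (Disjoint on fun i : ι => B i) :=
    (D'.pairwise_disjoint_stanleyBox.comp_of_injective Subtype.val_injective).mono
      fun _ _ h => h.preimage _
  refine ⟨ofStanleyBoxes _ _ hI ((Set.iUnion_congr hB).symm.trans hcover)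
    (hdisj.mono fun i j h => by rwa [onFun, ← hB, ← hB]), ?_⟩
  refine Nat.le_add_of_sub_le (le_sdepth_ofStanleyBoxes fun i => ?_)
  have := D'.sdepth_le_card i.1
  have := card_le_card_preimage_castSucc_add_one (D'.Z i.1)
  omega

theorem sdepth_multiply_new_variable_general (n : ℕ) (K : Type*) [Field K]
    (m : ℕ) (v : Fin (m + 1) → (Fin n →₀ ℕ)) :
    Ideal.sdepth K (Ideal.span
      (insert
        (monomial (Finsupp.mapDomain Fin.castSucc (v (Fin.last m)) +
          Finsupp.single (Fin.last n) 1) (1 : K))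
        (Set.range fun i : Fin m =>
          monomial (Finsupp.mapDomain Fin.castSucc (v i.castSucc)) (1 : K)))) ≤
    Ideal.sdepth K (Ideal.span
      (Set.range fun i : Fin (m + 1) => monomial (v i) (1 : K))) + 1 := by
  set T := Set.range fun i : Fin m => v i.castSucc
  set G' := insert (withLastOne (v (Fin.last m))) ((·.mapDomain Fin.castSucc) '' T)
  have hv : Set.range v = insert (v (Fin.last m)) T := by
    ext
    simp [T, Fin.exists_fin_succ', or_comm, eq_comm]
  have hE : withLastOne ⁻¹' upperClosure G' =
      (upperClosure (Set.range v) : Set (Fin n →₀ ℕ)) := by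
    rw [hv, withLastOne_preimage_upperClosure]
  refine Ideal.sdepth_le fun D' => ?_
  refine (D'.exists_sdepth_le_of_withLastOne_preimage (E' := upperClosure G') ?_ ?_
    (hE ▸ ⟨v 0, subset_upperClosure (Set.mem_range_self 0)⟩)).elim
    fun D hD => hD.trans (Nat.add_le_add_right D.sdepth_le_ideal_sdepth 1)
  · rw [← restrictScalars_span_monomial, Set.image_insert_eq, Set.image_image, ← Set.range_comp]
    rfl
  · rw [hE, ← restrictScalars_span_monomial, ← Set.range_comp]
    rfl

/-- Let `I ⊆ S` be a monomial ideal with minimal monomial generators `v₁, …, vₘ`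
(no generator divides another) and let `I' = (v₁, …, v_{m-1}, x_{n+1} vₘ) ⊆ S[x_{n+1}]`.
Then `sdepth I' ≤ sdepth I + 1`. Here the generators are `v 0, …, v m` with `vₘ = v (Fin.last m)`. -/
theorem sdepth_multiply_new_variable (n : ℕ) (K : Type*) [Field K]
    (m : ℕ) (v : Fin (m + 1) → (Fin n →₀ ℕ))
    (hmin : ∀ i j, i ≠ j → ¬ v i ≤ v j) :
    Ideal.sdepth K (Ideal.span
      (insert
        (monomial (Finsupp.mapDomain Fin.castSucc (v (Fin.last m)) +
          Finsupp.single (Fin.last n) 1) (1 : K))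
        (Set.range fun i : Fin m =>
          monomial (Finsupp.mapDomain Fin.castSucc (v i.castSucc)) (1 : K)))) ≤
    Ideal.sdepth K (Ideal.span
      (Set.range fun i : Fin (m + 1) => monomial (v i) (1 : K))) + 1 :=
  sdepth_multiply_new_variable_general n K m v
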